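/- Let q, p₁, p₂, w be real numbers with q ≠ 0. Let ℓ be the 2×2 real matrix with ℓ₁₁ = p₁, ℓ₁₂ = 1/q, ℓ₂₁ = −1/q, ℓ₂₂ = p₂. In M₂(ℝ) ⊗ M₂(ℝ), identified with 4×4 matrices via the Kronecker product with basis ordering e₁⊗e₁, e₁⊗e₂, e₂⊗e₁, e₂⊗e₂, define a = d = (1/(2q))·(−w·e₁₁⊗e₂₂ + e₁₂⊗e₂₁ − e₂₁⊗e₁₂ + w·e₂₂⊗e₁₁) and b = c = (1/(2q))·(−w·e₁₁⊗e₁₁ + e₁₂⊗e₁₂ − e₂₁⊗e₂₁ + w·e₂₂⊗e₂₂). Let B be the 4×4 matrix whose only nonzero entries are B₁₂ = p₁/q², B₁₃ = −p₁/q², B₂₁ = −p₁/q², B₂₂ = −2/q³, B₂₄ = p₂/q², B₃₁ = p₁/q², B₃₃ = 2/q³, B₃₄ = −p₂/q², B₄₂ = −p₂/q², B₄₃ = p₂/q². Then, with ℓ₁ = ℓ⊗𝟙 and ℓ₂ = 𝟙⊗ℓ, one has B = a·ℓ₁·ℓ₂ + ℓ₁·b·ℓ₂ − ℓ₂·c·ℓ₁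 − ℓ₁·ℓ₂·d. -/

import Mathlib

open Matrix Kronecker

noncomputable section

/-- `2×2` real matrices. -/
abbrev M2 : Type := Matrix (Fin 2) (Fin 2) ℝ

/-- `M₂(ℝ) ⊗ M₂(ℝ)` realized as `4×4` matrices via the Kronecker product,
with basis ordering `e₁⊗e₁, e₁⊗e₂, e₂⊗e₁, e₂⊗e₂`. -/
abbrev M4 : Type := Matrix (Fin 2 × Fin 2) (Fin 2 × Fin 2) ℝ

/-- The `2×2` elementary matrix `e_{ij}` (indices `0,1` for `1,2`). -/
def E (i j : Fin 2) : M2 := Matrix.single i j 1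

/-! The gauge parameter `w` drops out: its contribution to `(a, b)` has the form
`(u₂ - v₁, -(v₁ + u₂))`, where `u₂ = 1 ⊗ u`, `v₁ = v ⊗ 1` and `u = v = (w / 4q) σ_z`. Any such
pair contributes nothing to `a ℓ₁ℓ₂ + ℓ₁ b ℓ₂ - ℓ₂ b ℓ₁ - ℓ₁ℓ₂ a`, because `ℓ₁` commutes with
`ℓ₂` and `u₂`, and `ℓ₂` with `v₁`. What is left, the case `w = 0`, is an
entrywise computation. -/

section QuadraticBracket

variable {R : Type*} [Ring R]

def quadraticBracket (l₁ l₂ a b : R) : R :=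
  a * l₁ * l₂ + l₁ * b * l₂ - l₂ * b * l₁ - l₁ * l₂ * a

theorem quadraticBracket_add (l₁ l₂ a b a' b' : R) :
    quadraticBracket l₁ l₂ (a + a') (b + b') =
      quadraticBracket l₁ l₂ a b + quadraticBracket l₁ l₂ a' b' := by
  unfold quadraticBracket
  noncomm_ring

theorem quadraticBracket_gauge_eq_zero {l₁ l₂ u v : R} (h₁₂ : Commute l₁ l₂)
    (h₁u : Commute l₁ u) (h₂v : Commute l₂ v) :
    quadraticBracket l₁ l₂ (u - v) (-(v + u)) = 0 := by
  unfold quadraticBracket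
  have hu : u * l₁ * l₂ = l₁ * u * l₂ := by rw [h₁u.eq]
  have hv : l₁ * v * l₂ = l₁ * l₂ * v := by rw [mul_assoc, ← h₂v.eq, ← mul_assoc]
  have hu' : l₂ * u * l₁ = l₁ * l₂ * u := by
    rw [mul_assoc, ← h₁u.eq, ← mul_assoc, h₁₂.eq]
  have hv' : l₂ * v * l₁ = v * l₁ * l₂ := by
    rw [h₂v.eq, mul_assoc, ← h₁₂.eq, mul_assoc]
  simp only [mul_sub, sub_mul, mul_add, add_mul, mul_neg, neg_mul, hu, hv, hu', hv']
  abel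

end QuadraticBracket

theorem Matrix.commute_kronecker_one_one_kronecker {m n α : Type*} [Fintype m] [Fintype n]
    [DecidableEq m] [DecidableEq n] [CommSemiring α] (X : Matrix m m α) (Y : Matrix n n α) :
    Commute (X ⊗ₖ (1 : Matrix n n α)) ((1 : Matrix m m α) ⊗ₖ Y) := by
  rw [Commute, SemiconjBy, ← mul_kronecker_mul, ← mul_kronecker_mul]
  simp

def sigmaZ : M2 := E 0 0 - E 1 1

theorem one_kronecker_sigmaZ_sub_sigmaZ_kronecker_one :
    (1 : M2) ⊗ₖ sigmaZ - sigmaZ ⊗ₖ (1 : M2) = (2 : ℝ) • (E 1 1 ⊗ₖ E 0 0 - E 0 0 ⊗ₖ E 1 1) := by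
  ext ⟨i, k⟩ ⟨j, l⟩
  fin_cases i <;> fin_cases k <;> fin_cases j <;> fin_cases l <;>
    norm_num [sigmaZ, E, single_apply, one_apply]

theorem sigmaZ_kronecker_one_add_one_kronecker_sigmaZ :
    sigmaZ ⊗ₖ (1 : M2) + (1 : M2) ⊗ₖ sigmaZ = (2 : ℝ) • (E 0 0 ⊗ₖ E 0 0 - E 1 1 ⊗ₖ E 1 1) := by
  ext ⟨i, k⟩ ⟨j, l⟩
  fin_cases i <;> fin_cases k <;> fin_cases j <;> fin_cases l <;>
    norm_num [sigmaZ, E, single_apply, one_apply]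

theorem stmt8 (q p₁ p₂ w : ℝ)
    (ℓ : M2) (hℓ : ℓ = !![p₁, 1 / q; -(1 / q), p₂])
    (a b c d : M4)
    (ha : a = (1 / (2 * q)) •
      (-(w • (E 0 0 ⊗ₖ E 1 1)) + E 0 1 ⊗ₖ E 1 0 - E 1 0 ⊗ₖ E 0 1 + w • (E 1 1 ⊗ₖ E 0 0)))
    (hdm : d = a)
    (hc : c = (1 / (2 * q)) •
      (-(w • (E 0 0 ⊗ₖ E 0 0)) + E 0 1 ⊗ₖ E 0 1 - E 1 0 ⊗ₖ E 1 0 + w • (E 1 1 ⊗ₖ E 1 1)))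
    (hb : b = c)
    (B : M4)
    (hB : B =
        Matrix.single (0, 0) (0, 1) (p₁ / q ^ 2)
      + Matrix.single (0, 0) (1, 0) (-(p₁ / q ^ 2))
      + Matrix.single (0, 1) (0, 0) (-(p₁ / q ^ 2))
      + Matrix.single (0, 1) (0, 1) (-(2 / q ^ 3))
      + Matrix.single (0, 1) (1, 1) (p₂ / q ^ 2)
      + Matrix.single (1, 0) (0, 0) (p₁ / q ^ 2)
      + Matrix.single (1, 0) (1, 0) (2 / q ^ 3)
      + Matrix.single (1, 0) (1, 1) (-(p₂ / q ^ 2))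
      + Matrix.single (1, 1) (0, 1) (-(p₂ / q ^ 2))
      + Matrix.single (1, 1) (1, 0) (p₂ / q ^ 2))
    (ℓ₁ ℓ₂ : M4) (hℓ₁ : ℓ₁ = ℓ ⊗ₖ (1 : M2)) (hℓ₂ : ℓ₂ = (1 : M2) ⊗ₖ ℓ) :
    B = a * ℓ₁ * ℓ₂ + ℓ₁ * b * ℓ₂ - ℓ₂ * c * ℓ₁ - ℓ₁ * ℓ₂ * d := by
  subst d b ℓ₁ ℓ₂
  change B = quadraticBracket (ℓ ⊗ₖ 1) (1 ⊗ₖ ℓ) a c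
  set h : M2 := (w / (4 * q)) • sigmaZ
  have ha' : a = (1 / (2 * q)) • (E 0 1 ⊗ₖ E 1 0 - E 1 0 ⊗ₖ E 0 1) + (1 ⊗ₖ h - h ⊗ₖ 1) := by
    rw [ha, kronecker_smul, smul_kronecker, ← smul_sub,
      one_kronecker_sigmaZ_sub_sigmaZ_kronecker_one]
    module
  have hc' : c = (1 / (2 * q)) • (E 0 1 ⊗ₖ E 0 1 - E 1 0 ⊗ₖ E 1 0) + -(h ⊗ₖ 1 + 1 ⊗ₖ h) := by
    rw [hc, kronecker_smul, smul_kronecker, ← smul_add,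
      sigmaZ_kronecker_one_add_one_kronecker_sigmaZ]
    module
  rw [ha', hc', quadraticBracket_add, quadraticBracket_gauge_eq_zero
    (commute_kronecker_one_one_kronecker ℓ ℓ) (commute_kronecker_one_one_kronecker ℓ h)
    (commute_kronecker_one_one_kronecker h ℓ).symm, add_zero, hB, hℓ]
  ext ⟨i, k⟩ ⟨j, l⟩
  fin_cases i <;> fin_cases k <;> fin_cases j <;> fin_cases l <;>
    simp [quadraticBracket, E, mul_apply, Fintype.sum_prod_type, single_apply, one_apply] <;>
    ring

end
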